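/- Let d ≥ 1. Let ρ₀ : ℝ^d → ℝ be nonnegative, Lipschitz continuous with constant L, supported in a compact set D ⊆ ℝ^d, with ∫_{ℝ^d} ρ₀(x) dx = 1. Let φ : ℝ^d → ℝ be a smooth nonnegative function supported in {x : |x|_∞ ≤ 1/2} with ∫_{ℝ^d} φ(x) dx = 1, and for ε > 0 set φ_ε(x) = ε^{−d} φ(x/ε). For h > 0 let Θ_h = {θ ∈ ℤ^d : hθ ∈ D}, let ε_h = h^{1/(6d)}, and define ρ_h(x) = Σ_{θ ∈ Θ_h} h^d ρ₀(hθ) φ_{ε_h}(x − hθ). Then there exists h₀ > 0 (depending on d, D, L, and φ) such that for all 0 < h ≤ h₀, ∫_{ℝ^d} |ρ_h(x) − ρ₀(x)|² dx ≤ ε_h^{1/2} = h^{1/(12d)}. -/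

import Mathlib

open MeasureTheory
open scoped NNReal

/-- The scaled lattice point `hθ ∈ ℝ^d` associated with `θ ∈ ℤ^d`. -/
def latticePt (d : ℕ) (h : ℝ) (θ : Fin d → ℤ) : EuclideanSpace ℝ (Fin d) :=
  WithLp.toLp 2 (fun i => h * (θ i : ℝ))

namespace InitErr
variable {d : ℕ}

lemma norm_le_sqrt_mul {x : EuclideanSpace ℝ (Fin d)} {c : ℝ} (hc : 0 ≤ c)
    (h : ∀ i, |x i| ≤ c) : ‖x‖ ≤ Real.sqrt d * c := by
  rw [EuclideanSpace.norm_eq]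
  calc Real.sqrt (∑ i, ‖x i‖ ^ 2) ≤ Real.sqrt (∑ _i : Fin d, c ^ 2) := by
        apply Real.sqrt_le_sqrt; apply Finset.sum_le_sum; intro i _
        have := h i; rw [Real.norm_eq_abs]; nlinarith [abs_nonneg (x i)]
    _ = Real.sqrt d * c := by
        rw [Finset.sum_const, Finset.card_univ, Fintype.card_fin, nsmul_eq_mul,
          Real.sqrt_mul (by positivity), Real.sqrt_sq hc]

lemma abs_coord_le (x : EuclideanSpace ℝ (Fin d)) (i : Fin d) : |x i| ≤ ‖x‖ := by
  rw [EuclideanSpace.norm_eq]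
  have h : |x i| = Real.sqrt (‖x i‖ ^ 2) := by
    rw [Real.sqrt_sq (norm_nonneg _), Real.norm_eq_abs]
  rw [h]
  apply Real.sqrt_le_sqrt
  exact Finset.single_le_sum (f := fun j => ‖x j‖ ^ 2) (fun j _ => by positivity)
    (Finset.mem_univ i)

lemma lattice_finite {c : ℝ} (hc : 0 < c) {K : Set (EuclideanSpace ℝ (Fin d))}
    {R : ℝ} (hK : ∀ x ∈ K, ‖x‖ ≤ R) :
    {θ : Fin d → ℤ | latticePt d c θ ∈ K}.Finite := by
  apply Set.Finite.subset (Set.Finite.pi (fun i : Fin d =>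
    Set.finite_Icc (⌈-(R / c)⌉ : ℤ) ⌊R / c⌋))
  intro θ hθ
  simp only [Set.mem_pi, Set.mem_univ, forall_true_left, Set.mem_Icc]
  intro i
  have h1 : |c * (θ i : ℝ)| ≤ R := by
    have := abs_coord_le (latticePt d c θ) i
    exact le_trans this (hK _ hθ)
  have h2 : |(θ i : ℝ)| ≤ R / c := by
    rw [abs_mul, abs_of_pos hc] at h1
    rw [le_div_iff₀ hc, mul_comm]; exact h1
  rw [abs_le] at h2
  constructor
  · rw [Int.ceil_le]; linarith [h2.1]
  · rw [Int.le_floor]; linarith [h2.2]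

/-- The half-open cell with lower corner `a` and side `δ`. -/
def cell (a : Fin d → ℝ) (δ : ℝ) : Set (EuclideanSpace ℝ (Fin d)) :=
  (MeasurableEquiv.toLp 2 (Fin d → ℝ)).symm ⁻¹'
    (Set.univ.pi fun i => Set.Ico (a i) (a i + δ))

lemma mem_cell {a : Fin d → ℝ} {δ : ℝ} {y : EuclideanSpace ℝ (Fin d)} :
    y ∈ cell a δ ↔ ∀ i, a i ≤ y i ∧ y i < a i + δ := by
  simp [cell, Set.mem_pi, Set.mem_Ico]

lemma cell_measurable (a : Fin d → ℝ) (δ : ℝ) : MeasurableSet (cell a δ) :=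
  (MeasurableEquiv.toLp 2 (Fin d → ℝ)).symm.measurable
    (MeasurableSet.univ_pi fun _ => measurableSet_Ico)

lemma cell_volume (a : Fin d → ℝ) {δ : ℝ} (hδ : 0 ≤ δ) :
    volume (cell a δ) = ENNReal.ofReal (δ ^ d) := by
  rw [cell, (EuclideanSpace.volume_preserving_symm_measurableEquiv_toLp (Fin d)).measure_preimage
    ((MeasurableSet.univ_pi fun _ => measurableSet_Ico).nullMeasurableSet)]
  rw [volume_pi_pi]
  simp only [Real.volume_Ico, add_sub_cancel_left]
  rw [Finset.prod_const, Finset.card_univ, Fintype.card_fin, ← ENNReal.ofReal_pow hδ]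

lemma card_Icc_le {A B : ℝ} (h : A ≤ B) :
    ((Finset.Icc ⌈A⌉ ⌊B⌋).card : ℝ) ≤ B - A + 1 := by
  rw [Int.card_Icc]
  rcases le_or_gt 0 (⌊B⌋ + 1 - ⌈A⌉) with hnn | hneg
  · have : ((⌊B⌋ + 1 - ⌈A⌉).toNat : ℝ) = ((⌊B⌋ : ℝ) + 1 - (⌈A⌉ : ℝ)) := by
      have := Int.toNat_of_nonneg hnn
      exact_mod_cast congrArg (Int.cast : ℤ → ℝ) this
    rw [this]
    have h1 := Int.floor_le B
    have h2 := Int.le_ceil A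
    linarith
  · have : (⌊B⌋ + 1 - ⌈A⌉).toNat = 0 := Int.toNat_of_nonpos hneg.le
    rw [this]
    simp only [Nat.cast_zero]
    linarith

lemma riemann (φ : EuclideanSpace ℝ (Fin d) → ℝ)
    (hφc : Continuous φ) (hφcs : HasCompactSupport φ)
    (hφsupp : ∀ x : EuclideanSpace ℝ (Fin d), (∃ i, 1 / 2 < |x i|) → φ x = 0)
    (hφint : ∫ x, φ x = 1)
    {Kφ : ℝ≥0} (hK : LipschitzWith Kφ φ)
    {δ : ℝ} (hδ : 0 < δ) (hδ1 : δ ≤ 1) (z : EuclideanSpace ℝ (Fin d))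
    (W : Finset (Fin d → ℤ))
    (hW : ∀ θ : Fin d → ℤ, φ (z - latticePt d δ θ) ≠ 0 → θ ∈ W) :
    |∑ θ ∈ W, δ ^ d * φ (z - latticePt d δ θ) - 1| ≤ ((Kφ : ℝ) * Real.sqrt d * 4 ^ d) * δ := by
  set a : ℝ := 1 / 2 + δ with ha
  have ha0 : (0 : ℝ) < a := by positivity
  set T : Finset (Fin d → ℤ) :=
    Fintype.piFinset fun i => Finset.Icc ⌈(z i - a) / δ⌉ ⌊(z i + a) / δ⌋ with hT
  set F : (Fin d → ℤ) → ℝ := fun θ => δ ^ d * φ (z - latticePt d δ θ) with hF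
  -- support of F is inside T
  have hsuppT : ∀ θ : Fin d → ℤ, φ (z - latticePt d δ θ) ≠ 0 → θ ∈ T := by
    intro θ hne
    have hcoord : ∀ i, |z i - δ * θ i| ≤ 1 / 2 := by
      intro i
      by_contra hlt
      push_neg at hlt
      exact hne (hφsupp _ ⟨i, hlt⟩)
    rw [hT, Fintype.mem_piFinset]
    intro i
    have hci := abs_le.1 (hcoord i)
    rw [Finset.mem_Icc]
    constructor
    · rw [Int.ceil_le, div_le_iff₀ hδ, ha]
      linarith [hci.2, hδ.le, mul_comm δ ((θ i : ℝ))]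
    · rw [Int.le_floor, le_div_iff₀ hδ, ha]
      linarith [hci.1, hδ.le, mul_comm δ ((θ i : ℝ))]
  -- sum over W equals sum over T
  have sumWT : ∑ θ ∈ W, F θ = ∑ θ ∈ T, F θ := by
    have hvan : ∀ θ : Fin d → ℤ, φ (z - latticePt d δ θ) = 0 → F θ = 0 := by
      intro θ h0; rw [hF]; simp [h0]
    have h1 : ∑ θ ∈ W ∩ T, F θ = ∑ θ ∈ W, F θ := by
      apply Finset.sum_subset Finset.inter_subset_left
      intro θ hθW hθn
      by_contra hne
      have : φ (z - latticePt d δ θ) ≠ 0 := by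
        intro h0; exact hne (hvan θ h0)
      exact hθn (Finset.mem_inter.2 ⟨hθW, hsuppT θ this⟩)
    have h2 : ∑ θ ∈ W ∩ T, F θ = ∑ θ ∈ T, F θ := by
      apply Finset.sum_subset Finset.inter_subset_right
      intro θ hθT hθn
      by_contra hne
      have : φ (z - latticePt d δ θ) ≠ 0 := by
        intro h0; exact hne (hvan θ h0)
      exact hθn (Finset.mem_inter.2 ⟨hW θ this, hθT⟩)
    rw [← h1, h2]
  -- the translated blob
  set ψ : EuclideanSpace ℝ (Fin d) → ℝ := fun y => φ (z - y) with hψ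
  have hψc : Continuous ψ := hφc.comp (continuous_const.sub continuous_id)
  have hψcs : HasCompactSupport ψ := hφcs.comp_homeomorph (Homeomorph.subLeft z)
  have hψint : Integrable ψ := hψc.integrable_of_hasCompactSupport hψcs
  have hψ1 : ∫ y, ψ y = 1 := by
    rw [hψ]; rw [integral_sub_left_eq_self φ volume z]; exact hφint
  -- the cells
  set Q : (Fin d → ℤ) → Set (EuclideanSpace ℝ (Fin d)) :=
    fun θ => cell (fun i => δ * θ i) δ with hQ
  have hQmem : ∀ (θ : Fin d → ℤ) (y : EuclideanSpace ℝ (Fin d)),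
      y ∈ Q θ ↔ ∀ i, ⌊y i / δ⌋ = θ i := by
    intro θ y
    rw [hQ, mem_cell]
    apply forall_congr'
    intro i
    rw [Int.floor_eq_iff]
    constructor
    · rintro ⟨h1, h2⟩
      constructor
      · rw [le_div_iff₀ hδ]; linarith [mul_comm δ (θ i : ℝ)]
      · rw [div_lt_iff₀ hδ]; push_cast; nlinarith
    · rintro ⟨h1, h2⟩
      rw [le_div_iff₀ hδ] at h1
      rw [div_lt_iff₀ hδ] at h2
      push_cast at h2
      constructor
      · linarith [mul_comm δ (θ i : ℝ)]
      · nlinarith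
  have hdisj : (T : Set (Fin d → ℤ)).PairwiseDisjoint Q := by
    intro θ _ θ' _ hne
    rw [Function.onFun, Set.disjoint_left]
    intro y hy hy'
    apply hne
    funext i
    exact ((hQmem θ y).1 hy i).symm.trans ((hQmem θ' y).1 hy' i)
  have hcover : ∀ y : EuclideanSpace ℝ (Fin d), ψ y ≠ 0 → y ∈ ⋃ θ ∈ T, Q θ := by
    intro y hy
    set θ : Fin d → ℤ := fun i => ⌊y i / δ⌋ with hθdef
    have hyQ : y ∈ Q θ := (hQmem θ y).2 fun i => rfl
    have hcoord : ∀ i, |z i - y i| ≤ 1 / 2 := by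
      intro i
      by_contra hlt
      push_neg at hlt
      exact hy (hφsupp _ ⟨i, hlt⟩)
    have hcell := (hQmem θ y).1 hyQ
    have hθT : θ ∈ T := by
      rw [hT, Fintype.mem_piFinset]
      intro i
      have h1 : (θ i : ℝ) ≤ y i / δ := by
        rw [hθdef]; exact Int.floor_le _
      have h2 : y i / δ < θ i + 1 := by
        rw [hθdef]; exact Int.lt_floor_add_one _
      rw [le_div_iff₀ hδ] at h1
      rw [div_lt_iff₀ hδ] at h2
      have hci := abs_le.1 (hcoord i)
      have hexp : ((θ i : ℝ) + 1) * δ = (θ i : ℝ) * δ + δ := by ring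
      rw [Finset.mem_Icc]
      constructor
      · rw [Int.ceil_le, div_le_iff₀ hδ, ha]
        linarith [hci.2, h1, h2, hexp]
      · rw [Int.le_floor, le_div_iff₀ hδ, ha]
        linarith [hci.1, h1]
    exact Set.mem_biUnion hθT hyQ
  -- the integral splits over the cells
  have hsplit : ∫ y, ψ y = ∑ θ ∈ T, ∫ y in Q θ, ψ y := by
    rw [← setIntegral_eq_integral_of_forall_compl_eq_zero
      (s := ⋃ θ ∈ T, Q θ) (fun y hy => by
        by_contra hne
        exact hy (hcover y hne))]
    exact integral_biUnion_finset T (fun θ _ => cell_measurable _ _) hdisj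
      (fun θ _ => hψint.integrableOn)
  -- per-cell estimate
  have percell : ∀ θ ∈ T,
      |F θ - ∫ y in Q θ, ψ y| ≤ (Kφ : ℝ) * Real.sqrt d * δ * δ ^ d := by
    intro θ _
    have hQm : MeasurableSet (Q θ) := cell_measurable _ _
    have hvol : volume (Q θ) = ENNReal.ofReal (δ ^ d) := cell_volume _ hδ.le
    have hvolr : (volume (Q θ)).toReal = δ ^ d := by
      rw [hvol, ENNReal.toReal_ofReal (by positivity)]
    have hvlt : volume (Q θ) < ⊤ := by rw [hvol]; exact ENNReal.ofReal_lt_top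
    have hci : IntegrableOn (fun _ => φ (z - latticePt d δ θ)) (Q θ) :=
      integrableOn_const hvlt.ne
    have hψon : IntegrableOn ψ (Q θ) := hψint.integrableOn
    have hconst : ∫ _y in Q θ, φ (z - latticePt d δ θ) = F θ := by
      rw [setIntegral_const, measureReal_def, hvolr, smul_eq_mul, hF]
    have hrw : F θ - ∫ y in Q θ, ψ y
        = ∫ y in Q θ, (φ (z - latticePt d δ θ) - ψ y) := by
      rw [integral_sub hci hψon, hconst]
    rw [hrw]
    have hbound : ∀ y ∈ Q θ, |φ (z - latticePt d δ θ) - ψ y|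
        ≤ (Kφ : ℝ) * (Real.sqrt d * δ) := by
      intro y hy
      have hd0 := hK.dist_le_mul (z - latticePt d δ θ) (z - y)
      rw [Real.dist_eq, dist_eq_norm] at hd0
      have heq : (z - latticePt d δ θ) - (z - y) = y - latticePt d δ θ :=
        sub_sub_sub_cancel_left _ _ _
      rw [heq] at hd0
      refine le_trans hd0 (mul_le_mul_of_nonneg_left ?_ (NNReal.coe_nonneg Kφ))
      apply norm_le_sqrt_mul hδ.le
      intro i
      have hc := mem_cell.1 hy i
      have : (y - latticePt d δ θ) i = y i - δ * θ i := rfl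
      rw [this, abs_le]
      constructor <;> [linarith [hc.1]; linarith [hc.2]]
    calc |∫ y in Q θ, (φ (z - latticePt d δ θ) - ψ y)|
        ≤ ∫ y in Q θ, |φ (z - latticePt d δ θ) - ψ y| :=
          by
            simpa [Real.norm_eq_abs] using
              norm_integral_le_integral_norm (μ := volume.restrict (Q θ))
                (fun y => φ (z - latticePt d δ θ) - ψ y)
      _ ≤ ∫ _y in Q θ, (Kφ : ℝ) * (Real.sqrt d * δ) := by
          apply setIntegral_mono_on ((hci.sub hψon).abs)
            (integrableOn_const hvlt.ne) hQm hbound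
      _ = (Kφ : ℝ) * Real.sqrt d * δ * δ ^ d := by
          rw [setIntegral_const, measureReal_def, hvolr, smul_eq_mul]; ring
  -- cardinality bound
  have cardb : (T.card : ℝ) * δ ^ d ≤ 4 ^ d := by
    rw [hT, Fintype.card_piFinset]
    push_cast
    rw [show (δ : ℝ) ^ d = ∏ _i : Fin d, δ by
      rw [Finset.prod_const, Finset.card_univ, Fintype.card_fin]]
    rw [← Finset.prod_mul_distrib]
    calc (∏ i : Fin d, ((Finset.Icc ⌈(z i - a) / δ⌉ ⌊(z i + a) / δ⌋).card : ℝ) * δ)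
        ≤ ∏ _i : Fin d, (4 : ℝ) := by
          apply Finset.prod_le_prod
          · intro i _; exact mul_nonneg (Nat.cast_nonneg _) hδ.le
          · intro i _
            have hAB : (z i - a) / δ ≤ (z i + a) / δ := by
              gcongr
              linarith [ha0.le]
            have h3 : ((Finset.Icc ⌈(z i - a) / δ⌉ ⌊(z i + a) / δ⌋).card : ℝ)
                ≤ 2 * a / δ + 1 := by
              refine (card_Icc_le hAB).trans_eq ?_
              field_simp
              ring
            calc ((Finset.Icc ⌈(z i - a) / δ⌉ ⌊(z i + a) / δ⌋).card : ℝ) * δ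
                ≤ (2 * a / δ + 1) * δ := mul_le_mul_of_nonneg_right h3 hδ.le
              _ = 2 * a + δ := by field_simp
              _ ≤ 4 := by rw [ha]; linarith
      _ = 4 ^ d := by rw [Finset.prod_const, Finset.card_univ, Fintype.card_fin]
  -- assemble
  have h1T : (1 : ℝ) = ∑ θ ∈ T, ∫ y in Q θ, ψ y := by rw [← hsplit, hψ1]
  calc |∑ θ ∈ W, δ ^ d * φ (z - latticePt d δ θ) - 1|
      = |∑ θ ∈ T, (F θ - ∫ y in Q θ, ψ y)| := by
        rw [Finset.sum_sub_distrib, ← h1T, ← sumWT, hF]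
    _ ≤ ∑ θ ∈ T, |F θ - ∫ y in Q θ, ψ y| := Finset.abs_sum_le_sum_abs _ _
    _ ≤ ∑ _θ ∈ T, (Kφ : ℝ) * Real.sqrt d * δ * δ ^ d := Finset.sum_le_sum percell
    _ = (T.card : ℝ) * δ ^ d * ((Kφ : ℝ) * Real.sqrt d * δ) := by
        rw [Finset.sum_const, nsmul_eq_mul]; ring
    _ ≤ 4 ^ d * ((Kφ : ℝ) * Real.sqrt d * δ) := by
        apply mul_le_mul_of_nonneg_right cardb (by positivity)
    _ = (Kφ : ℝ) * Real.sqrt d * 4 ^ d * δ := by ring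

lemma rpow_le_inv_of_le_pow {h c : ℝ} (h0 : 0 < h) (hc : 1 ≤ c) {n : ℕ} (hn : 0 < n)
    (hh : h ≤ c⁻¹ ^ n) : h ^ ((1 : ℝ) / n) ≤ c⁻¹ := by
  have hc0 : 0 < c := lt_of_lt_of_le one_pos hc
  calc h ^ ((1 : ℝ) / n) ≤ (c⁻¹ ^ n) ^ ((1 : ℝ) / n) :=
        Real.rpow_le_rpow h0.le hh (by positivity)
    _ = c⁻¹ := by
      rw [← Real.rpow_natCast c⁻¹ n, ← Real.rpow_mul (by positivity)]
      rw [mul_one_div, div_self (by exact_mod_cast hn.ne')]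
      exact Real.rpow_one _

end InitErr

set_option maxHeartbeats 1000000 in
/-- Initial error estimate: the regularized empirical measure at time 0 built from
Chorin-type sampling on the scaled lattice `hθ ∈ D` with weights `ρ₀(hθ) h^d` and blob
function `φ` at scale `ε_h = h^{1/(6d)}` is within `h^{1/(12d)}` of `ρ₀` in squared L²
norm, for all sufficiently small `h`. -/
theorem initial_error_L2 (d : ℕ) (hd : 1 ≤ d)
    (D : Set (EuclideanSpace ℝ (Fin d))) (hD : IsCompact D)
    (ρ₀ : EuclideanSpace ℝ (Fin d) → ℝ) (hρ0 : ∀ x, 0 ≤ ρ₀ x)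
    (L : ℝ≥0) (hρL : LipschitzWith L ρ₀)
    (hρsupp : ∀ x, x ∉ D → ρ₀ x = 0)
    (hρint : ∫ x, ρ₀ x = 1)
    (φ : EuclideanSpace ℝ (Fin d) → ℝ) (hφ : ContDiff ℝ (⊤ : ℕ∞) φ) (hφ0 : ∀ x, 0 ≤ φ x)
    (hφsupp : ∀ x : EuclideanSpace ℝ (Fin d), (∃ i, 1 / 2 < |x i|) → φ x = 0)
    (hφint : ∫ x, φ x = 1) :
    ∃ h₀ > (0 : ℝ), ∀ h : ℝ, 0 < h → h ≤ h₀ →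
      (∫ x, ((∑ᶠ θ ∈ {θ : Fin d → ℤ | latticePt d h θ ∈ D},
            h ^ d * ρ₀ (latticePt d h θ)
              * (((h ^ ((1 : ℝ) / (6 * d))) ^ d)⁻¹
                * φ ((h ^ ((1 : ℝ) / (6 * d)))⁻¹ • (x - latticePt d h θ))))
          - ρ₀ x) ^ 2)
        ≤ h ^ ((1 : ℝ) / (12 * d)) := by
  have hd1 : (1 : ℝ) ≤ d := by exact_mod_cast hd
  have hd0 : (0 : ℝ) < d := lt_of_lt_of_le one_pos hd1
  have hsqd1 : (1 : ℝ) ≤ Real.sqrt d := by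
    rw [show (1 : ℝ) = Real.sqrt 1 from Real.sqrt_one.symm]
    exact Real.sqrt_le_sqrt hd1
  have hsqd0 : (0 : ℝ) < Real.sqrt d := lt_of_lt_of_le one_pos hsqd1
  have hφcont : Continuous φ := hφ.continuous
  have hφcs : HasCompactSupport φ := by
    apply HasCompactSupport.intro
      (isCompact_closedBall (0 : EuclideanSpace ℝ (Fin d)) (Real.sqrt d))
    intro x hx
    by_contra hne
    apply hx
    rw [Metric.mem_closedBall, dist_zero_right]
    have hcoord : ∀ i, |x i| ≤ 1 / 2 := by
      intro i; by_contra hgt; push_neg at hgt; exact hne (hφsupp x ⟨i, hgt⟩)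
    calc ‖x‖ ≤ Real.sqrt d * (1 / 2) := InitErr.norm_le_sqrt_mul (by norm_num) hcoord
      _ ≤ Real.sqrt d := by linarith
  obtain ⟨Kφ, hK⟩ := ContDiff.lipschitzWith_of_hasCompactSupport hφcs hφ (by simp)
  -- radius of D
  obtain ⟨R₀, hR₀⟩ := hD.isBounded.subset_closedBall 0
  set R : ℝ := max R₀ 1 with hR
  have hR1 : (1 : ℝ) ≤ R := le_max_right _ _
  have hDR : ∀ y ∈ D, ‖y‖ ≤ R := by
    intro y hy
    have := hR₀ hy
    rw [Metric.mem_closedBall, dist_zero_right] at this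
    exact le_trans this (le_max_left _ _)
  -- uniform bound on ρ₀
  set M : ℝ := (L : ℝ) * (2 * R + 1) with hM
  have hM0 : 0 ≤ M := by positivity
  have hρM : ∀ x, ρ₀ x ≤ M := by
    intro x
    by_cases hx : x ∈ D
    · have hxR : ‖x‖ ≤ R := hDR x hx
      set v : EuclideanSpace ℝ (Fin d) := EuclideanSpace.single ⟨0, hd⟩ (2 * R + 1) with hv
      have hvn : ‖v‖ = 2 * R + 1 := by
        rw [hv, EuclideanSpace.norm_single, Real.norm_eq_abs, abs_of_pos (by linarith)]
      have hy : x + v ∉ D := by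
        intro hmem
        have h1 := hDR _ hmem
        have h2 : ‖v‖ ≤ ‖x + v‖ + ‖x‖ := by
          calc ‖v‖ = ‖(x + v) - x‖ := by rw [add_sub_cancel_left]
            _ ≤ ‖x + v‖ + ‖x‖ := norm_sub_le _ _
        rw [hvn] at h2
        linarith
      have hρy : ρ₀ (x + v) = 0 := hρsupp _ hy
      have hLip := hρL.dist_le_mul x (x + v)
      rw [Real.dist_eq, hρy, sub_zero, dist_eq_norm] at hLip
      have hxv : x - (x + v) = -v := by abel
      rw [hxv, norm_neg, hvn] at hLip
      calc ρ₀ x ≤ |ρ₀ x| := le_abs_self _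
        _ ≤ (L : ℝ) * (2 * R + 1) := hLip
        _ = M := hM.symm
    · rw [hρsupp x hx]; exact hM0
  -- support region
  set B : Set (EuclideanSpace ℝ (Fin d)) := Metric.cthickening (Real.sqrt d) D with hB
  have hBc : IsCompact B := hD.cthickening
  have hBmeas : MeasurableSet B := hBc.isClosed.measurableSet
  have hVlt : volume B < ⊤ := hBc.measure_lt_top
  set V : ℝ := (volume B).toReal with hV
  have hV0 : 0 ≤ V := ENNReal.toReal_nonneg
  -- constants
  set Cr : ℝ := (Kφ : ℝ) * Real.sqrt d * 4 ^ d with hCr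
  have hCr0 : 0 ≤ Cr := by rw [hCr]; positivity
  set C₄ : ℝ := 2 * (L : ℝ) * Real.sqrt d + M * Cr with hC₄
  have hC₄0 : 0 ≤ C₄ := by rw [hC₄]; positivity
  set K₁ : ℝ := max 1 Cr with hK₁
  have hK₁1 : (1 : ℝ) ≤ K₁ := le_max_left _ _
  have hK₁0 : (0 : ℝ) < K₁ := lt_of_lt_of_le one_pos hK₁1
  set K₂ : ℝ := max 1 (V * C₄ ^ 2) with hK₂
  have hK₂1 : (1 : ℝ) ≤ K₂ := le_max_left _ _
  have hK₂0 : (0 : ℝ) < K₂ := lt_of_lt_of_le one_pos hK₂1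
  refine ⟨min 1 (min (K₁⁻¹ ^ (6 * d)) (K₂⁻¹ ^ (4 * d))), by positivity, ?_⟩
  intro h h0 hh₀
  have hh1 : h ≤ 1 := le_trans hh₀ (min_le_left _ _)
  have hhK₁ : h ≤ K₁⁻¹ ^ (6 * d) := le_trans hh₀ ((min_le_right _ _).trans (min_le_left _ _))
  have hhK₂ : h ≤ K₂⁻¹ ^ (4 * d) := le_trans hh₀ ((min_le_right _ _).trans (min_le_right _ _))
  set ε : ℝ := h ^ ((1 : ℝ) / (6 * d)) with hε
  have hε0 : 0 < ε := Real.rpow_pos_of_pos h0 _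
  have hε1 : ε ≤ 1 := Real.rpow_le_one h0.le hh1 (by positivity)
  set δ : ℝ := h / ε with hδdef
  have hδ0 : 0 < δ := div_pos h0 hε0
  have hδε : δ ≤ ε := by
    rw [hδdef, div_le_iff₀ hε0]
    have hεε : ε * ε = h ^ ((1 : ℝ) / (3 * d)) := by
      rw [hε, ← Real.rpow_add h0]; congr 1; field_simp; ring
    rw [hεε]
    calc h = h ^ (1 : ℝ) := (Real.rpow_one h).symm
      _ ≤ h ^ ((1 : ℝ) / (3 * d)) := by
        apply Real.rpow_le_rpow_of_exponent_ge h0 hh1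
        rw [div_le_one (by positivity)]
        linarith
  have hδ1 : δ ≤ 1 := le_trans hδε hε1
  have hεK₁ : ε ≤ K₁⁻¹ := by
    have := InitErr.rpow_le_inv_of_le_pow h0 hK₁1 (by positivity : 0 < 6 * d) hhK₁
    rw [show ((6 * d : ℕ) : ℝ) = 6 * (d : ℝ) by push_cast; ring] at this
    rw [hε]
    exact this
  have hCδ : Cr * δ ≤ 1 := by
    calc Cr * δ ≤ Cr * ε := mul_le_mul_of_nonneg_left hδε hCr0
      _ ≤ K₁ * K₁⁻¹ := mul_le_mul (le_max_right _ _) hεK₁ hε0.le hK₁0.le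
      _ = 1 := mul_inv_cancel₀ hK₁0.ne'
  -- pointwise estimate
  have key : ∀ x : EuclideanSpace ℝ (Fin d),
      |(∑ᶠ θ ∈ {θ : Fin d → ℤ | latticePt d h θ ∈ D},
          h ^ d * ρ₀ (latticePt d h θ)
            * ((ε ^ d)⁻¹ * φ (ε⁻¹ • (x - latticePt d h θ)))) - ρ₀ x| ≤ C₄ * ε
      ∧ (x ∉ B →
        (∑ᶠ θ ∈ {θ : Fin d → ℤ | latticePt d h θ ∈ D},
          h ^ d * ρ₀ (latticePt d h θ)
            * ((ε ^ d)⁻¹ * φ (ε⁻¹ • (x - latticePt d h θ)))) - ρ₀ x = 0) := by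
    intro x
    set z : EuclideanSpace ℝ (Fin d) := ε⁻¹ • x with hz
    have harg : ∀ θ : Fin d → ℤ,
        ε⁻¹ • (x - latticePt d h θ) = z - latticePt d δ θ := by
      intro θ
      ext i
      show ε⁻¹ * (x i - h * (θ i : ℝ)) = ε⁻¹ * x i - h / ε * (θ i : ℝ)
      rw [div_eq_mul_inv]; ring
    have hnear : ∀ θ : Fin d → ℤ, φ (ε⁻¹ • (x - latticePt d h θ)) ≠ 0 →
        ‖x - latticePt d h θ‖ ≤ Real.sqrt d * ε := by
      intro θ hne
      apply InitErr.norm_le_sqrt_mul hε0.le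
      intro i
      have hco : |(ε⁻¹ • (x - latticePt d h θ)) i| ≤ 1 / 2 := by
        by_contra hgt; push_neg at hgt; exact hne (hφsupp _ ⟨i, hgt⟩)
      have hrfl : (ε⁻¹ • (x - latticePt d h θ)) i = ε⁻¹ * (x i - h * (θ i : ℝ)) := rfl
      rw [hrfl, abs_mul, abs_of_pos (inv_pos.2 hε0)] at hco
      have h1 : ε * (ε⁻¹ * |x i - h * (θ i : ℝ)|) ≤ ε * (1 / 2) :=
        mul_le_mul_of_nonneg_left hco hε0.le
      rw [← mul_assoc, mul_inv_cancel₀ hε0.ne', one_mul] at h1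
      have hrfl2 : (x - latticePt d h θ) i = x i - h * (θ i : ℝ) := rfl
      rw [hrfl2]
      linarith [hε0]
    have hfin1 : {θ : Fin d → ℤ | latticePt d h θ ∈ D}.Finite :=
      InitErr.lattice_finite h0 hDR
    have hfin2 : {θ : Fin d → ℤ | φ (ε⁻¹ • (x - latticePt d h θ)) ≠ 0}.Finite := by
      apply Set.Finite.subset (InitErr.lattice_finite h0
        (K := {y : EuclideanSpace ℝ (Fin d) | ‖y‖ ≤ ‖x‖ + Real.sqrt d}) (fun y hy => hy))
      intro θ hθ
      simp only [Set.mem_setOf_eq] at hθ ⊢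
      have h1 := hnear θ hθ
      have h2 : latticePt d h θ = x - (x - latticePt d h θ) := by abel
      calc ‖latticePt d h θ‖ = ‖x - (x - latticePt d h θ)‖ := by rw [← h2]
        _ ≤ ‖x‖ + ‖x - latticePt d h θ‖ := norm_sub_le _ _
        _ ≤ ‖x‖ + Real.sqrt d := by nlinarith [hε1, hsqd0]
    have hΩ : ({θ : Fin d → ℤ | latticePt d h θ ∈ D}
        ∪ {θ : Fin d → ℤ | φ (ε⁻¹ • (x - latticePt d h θ)) ≠ 0}).Finite :=
      hfin1.union hfin2
    set W : Finset (Fin d → ℤ) := hΩ.toFinset with hWdef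
    have hWmem : ∀ θ : Fin d → ℤ, θ ∈ W ↔
        (latticePt d h θ ∈ D ∨ φ (ε⁻¹ • (x - latticePt d h θ)) ≠ 0) := by
      intro θ
      rw [hWdef, Set.Finite.mem_toFinset]
      exact Set.mem_union _ _ _
    -- convert the finsum into a finite sum over W
    have hAW : (∑ᶠ θ ∈ {θ : Fin d → ℤ | latticePt d h θ ∈ D},
        h ^ d * ρ₀ (latticePt d h θ) * ((ε ^ d)⁻¹ * φ (ε⁻¹ • (x - latticePt d h θ))))
        = ∑ θ ∈ W, h ^ d * ρ₀ (latticePt d h θ)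
            * ((ε ^ d)⁻¹ * φ (ε⁻¹ • (x - latticePt d h θ))) := by
      have hsf : ({θ : Fin d → ℤ | latticePt d h θ ∈ D} ∩ Function.support (fun θ =>
          h ^ d * ρ₀ (latticePt d h θ)
            * ((ε ^ d)⁻¹ * φ (ε⁻¹ • (x - latticePt d h θ))))).Finite :=
        hfin1.inter_of_left _
      rw [finsum_mem_eq_sum _ hsf]
      apply Finset.sum_subset
      · intro θ hθ
        rw [Set.Finite.mem_toFinset] at hθ
        rw [hWmem]
        exact Or.inl hθ.1
      · intro θ hθW hθn
        by_contra hne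
        apply hθn
        rw [Set.Finite.mem_toFinset]
        refine ⟨?_, hne⟩
        by_contra hD'
        exact hne (by simp [hρsupp _ hD'])
    have hδd : δ ^ d = h ^ d * (ε ^ d)⁻¹ := by
      rw [hδdef, div_pow, div_eq_mul_inv]
    have hgu : ∀ θ : Fin d → ℤ,
        h ^ d * ρ₀ (latticePt d h θ) * ((ε ^ d)⁻¹ * φ (ε⁻¹ • (x - latticePt d h θ)))
        = ρ₀ (latticePt d h θ) * (δ ^ d * φ (z - latticePt d δ θ)) := by
      intro θ
      rw [harg θ, hδd]; ring
    have hu0 : ∀ θ : Fin d → ℤ, 0 ≤ δ ^ d * φ (z - latticePt d δ θ) :=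
      fun θ => mul_nonneg (by positivity) (hφ0 _)
    have hWsup : ∀ θ : Fin d → ℤ, φ (z - latticePt d δ θ) ≠ 0 → θ ∈ W := by
      intro θ hne
      rw [hWmem]
      right
      rw [harg θ]
      exact hne
    have hS : |(∑ θ ∈ W, δ ^ d * φ (z - latticePt d δ θ)) - 1| ≤ Cr * δ := by
      rw [hCr]
      exact InitErr.riemann φ hφcont hφcs hφsupp hφint hK hδ0 hδ1 z W hWsup
    have hSabs := abs_le.1 hS
    have hSle : (∑ θ ∈ W, δ ^ d * φ (z - latticePt d δ θ)) ≤ 2 := by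
      linarith [hSabs.2, hCδ]
    have hS0 : 0 ≤ ∑ θ ∈ W, δ ^ d * φ (z - latticePt d δ θ) :=
      Finset.sum_nonneg fun θ _ => hu0 θ
    -- per-term Lipschitz bound
    have hterm : ∀ θ ∈ W,
        |(ρ₀ (latticePt d h θ) - ρ₀ x) * (δ ^ d * φ (z - latticePt d δ θ))|
        ≤ ((L : ℝ) * (Real.sqrt d * ε)) * (δ ^ d * φ (z - latticePt d δ θ)) := by
      intro θ _
      by_cases hz0 : φ (z - latticePt d δ θ) = 0
      · simp [hz0]
      · rw [abs_mul, abs_of_nonneg (hu0 θ)]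
        apply mul_le_mul_of_nonneg_right ?_ (hu0 θ)
        have hφne : φ (ε⁻¹ • (x - latticePt d h θ)) ≠ 0 := by rw [harg θ]; exact hz0
        have hdist := hρL.dist_le_mul (latticePt d h θ) x
        rw [Real.dist_eq, dist_eq_norm] at hdist
        have hnorm : ‖latticePt d h θ - x‖ ≤ Real.sqrt d * ε := by
          rw [← norm_neg, neg_sub]
          exact hnear θ hφne
        calc |ρ₀ (latticePt d h θ) - ρ₀ x| ≤ (L : ℝ) * ‖latticePt d h θ - x‖ := hdist
          _ ≤ (L : ℝ) * (Real.sqrt d * ε) :=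
            mul_le_mul_of_nonneg_left hnorm L.coe_nonneg
    have hsum1 : |∑ θ ∈ W, (ρ₀ (latticePt d h θ) - ρ₀ x) * (δ ^ d * φ (z - latticePt d δ θ))|
        ≤ ((L : ℝ) * (Real.sqrt d * ε)) * 2 := by
      calc |∑ θ ∈ W, (ρ₀ (latticePt d h θ) - ρ₀ x) * (δ ^ d * φ (z - latticePt d δ θ))|
          ≤ ∑ θ ∈ W, |(ρ₀ (latticePt d h θ) - ρ₀ x) * (δ ^ d * φ (z - latticePt d δ θ))| :=
            Finset.abs_sum_le_sum_abs _ _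
        _ ≤ ∑ θ ∈ W, ((L : ℝ) * (Real.sqrt d * ε)) * (δ ^ d * φ (z - latticePt d δ θ)) :=
            Finset.sum_le_sum hterm
        _ = ((L : ℝ) * (Real.sqrt d * ε)) * ∑ θ ∈ W, δ ^ d * φ (z - latticePt d δ θ) := by
            rw [Finset.mul_sum]
        _ ≤ ((L : ℝ) * (Real.sqrt d * ε)) * 2 :=
            mul_le_mul_of_nonneg_left hSle (by positivity)
    have hdecomp : (∑ θ ∈ W, ρ₀ (latticePt d h θ) * (δ ^ d * φ (z - latticePt d δ θ))) - ρ₀ x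
        = (∑ θ ∈ W, (ρ₀ (latticePt d h θ) - ρ₀ x) * (δ ^ d * φ (z - latticePt d δ θ)))
          + ρ₀ x * ((∑ θ ∈ W, δ ^ d * φ (z - latticePt d δ θ)) - 1) := by
      have e1 : ∑ θ ∈ W, (ρ₀ (latticePt d h θ) - ρ₀ x) * (δ ^ d * φ (z - latticePt d δ θ))
          = (∑ θ ∈ W, ρ₀ (latticePt d h θ) * (δ ^ d * φ (z - latticePt d δ θ)))
            - ρ₀ x * ∑ θ ∈ W, δ ^ d * φ (z - latticePt d δ θ) := by
        rw [Finset.mul_sum, ← Finset.sum_sub_distrib]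
        exact Finset.sum_congr rfl fun θ _ => by ring
      rw [e1]; ring
    constructor
    · rw [hAW, Finset.sum_congr rfl fun θ _ => hgu θ, hdecomp]
      calc |(∑ θ ∈ W, (ρ₀ (latticePt d h θ) - ρ₀ x) * (δ ^ d * φ (z - latticePt d δ θ)))
            + ρ₀ x * ((∑ θ ∈ W, δ ^ d * φ (z - latticePt d δ θ)) - 1)|
          ≤ |∑ θ ∈ W, (ρ₀ (latticePt d h θ) - ρ₀ x) * (δ ^ d * φ (z - latticePt d δ θ))|
            + |ρ₀ x * ((∑ θ ∈ W, δ ^ d * φ (z - latticePt d δ θ)) - 1)| := abs_add_le _ _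
        _ ≤ ((L : ℝ) * (Real.sqrt d * ε)) * 2 + M * (Cr * δ) := by
            apply add_le_add hsum1
            rw [abs_mul, abs_of_nonneg (hρ0 x)]
            exact mul_le_mul (hρM x) hS (abs_nonneg _) hM0
        _ ≤ C₄ * ε := by
            have hMCr : M * (Cr * δ) ≤ M * (Cr * ε) :=
              mul_le_mul_of_nonneg_left (mul_le_mul_of_nonneg_left hδε hCr0) hM0
            rw [hC₄]
            nlinarith [hMCr]
    · intro hxB
      rw [hAW]
      have hρx : ρ₀ x = 0 := by
        apply hρsupp
        intro hxD
        exact hxB (by rw [hB]; exact Metric.self_subset_cthickening D hxD)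
      rw [hρx, sub_zero]
      apply Finset.sum_eq_zero
      intro θ _
      by_contra hne
      apply hxB
      have hφne : φ (ε⁻¹ • (x - latticePt d h θ)) ≠ 0 := by
        intro h0'
        exact hne (by rw [h0']; ring)
      have hρθ : latticePt d h θ ∈ D := by
        by_contra hD'
        exact hne (by rw [hρsupp _ hD']; ring)
      rw [hB]
      apply Metric.mem_cthickening_of_dist_le x (latticePt d h θ) _ _ hρθ
      rw [dist_eq_norm]
      calc ‖x - latticePt d h θ‖ ≤ Real.sqrt d * ε := hnear θ hφne
        _ ≤ Real.sqrt d := by nlinarith [hε1, hsqd0]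
  -- integrate the pointwise bound
  have hmono : ∀ x : EuclideanSpace ℝ (Fin d),
      ((∑ᶠ θ ∈ {θ : Fin d → ℤ | latticePt d h θ ∈ D},
          h ^ d * ρ₀ (latticePt d h θ)
            * ((ε ^ d)⁻¹ * φ (ε⁻¹ • (x - latticePt d h θ)))) - ρ₀ x) ^ 2
      ≤ B.indicator (fun _ => (C₄ * ε) ^ 2) x := by
    intro x
    by_cases hxB : x ∈ B
    · rw [Set.indicator_of_mem hxB]
      have hb := (key x).1
      calc ((∑ᶠ θ ∈ {θ : Fin d → ℤ | latticePt d h θ ∈ D},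
            h ^ d * ρ₀ (latticePt d h θ)
              * ((ε ^ d)⁻¹ * φ (ε⁻¹ • (x - latticePt d h θ)))) - ρ₀ x) ^ 2
          = |(∑ᶠ θ ∈ {θ : Fin d → ℤ | latticePt d h θ ∈ D},
            h ^ d * ρ₀ (latticePt d h θ)
              * ((ε ^ d)⁻¹ * φ (ε⁻¹ • (x - latticePt d h θ)))) - ρ₀ x| ^ 2 :=
            (sq_abs _).symm
        _ ≤ (C₄ * ε) ^ 2 := by
            apply pow_le_pow_left₀ (abs_nonneg _) hb
    · rw [Set.indicator_of_notMem hxB, (key x).2 hxB]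
      norm_num
  have hind : Integrable (B.indicator fun _ => (C₄ * ε) ^ 2) :=
    IntegrableOn.integrable_indicator (integrableOn_const hVlt.ne) hBmeas
  have hInt : (∫ x, ((∑ᶠ θ ∈ {θ : Fin d → ℤ | latticePt d h θ ∈ D},
        h ^ d * ρ₀ (latticePt d h θ)
          * ((ε ^ d)⁻¹ * φ (ε⁻¹ • (x - latticePt d h θ)))) - ρ₀ x) ^ 2)
      ≤ ∫ x, B.indicator (fun _ => (C₄ * ε) ^ 2) x :=
    integral_mono_of_nonneg (Filter.Eventually.of_forall fun x => sq_nonneg _) hind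
      (Filter.Eventually.of_forall hmono)
  have hIval : (∫ x, B.indicator (fun _ => (C₄ * ε) ^ 2) x) = V * (C₄ * ε) ^ 2 := by
    rw [integral_indicator hBmeas, setIntegral_const, smul_eq_mul, measureReal_def, hV]
  refine le_trans hInt ?_
  rw [hIval]
  -- final rpow computation
  have hε2 : ε ^ 2 = h ^ ((1 : ℝ) / (3 * d)) := by
    rw [hε, ← Real.rpow_natCast (h ^ ((1 : ℝ) / (6 * (d : ℝ)))) 2, ← Real.rpow_mul h0.le]
    congr 1
    push_cast
    field_simp
    ring
  have hsplit2 : h ^ ((1 : ℝ) / (3 * (d : ℝ)))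
      = h ^ ((1 : ℝ) / (4 * d)) * h ^ ((1 : ℝ) / (12 * d)) := by
    rw [← Real.rpow_add h0]
    congr 1
    field_simp
    ring
  have hh4 : h ^ ((1 : ℝ) / (4 * (d : ℝ))) ≤ K₂⁻¹ := by
    have := InitErr.rpow_le_inv_of_le_pow h0 hK₂1 (by positivity : 0 < 4 * d) hhK₂
    rwa [show ((4 * d : ℕ) : ℝ) = 4 * (d : ℝ) by push_cast; ring] at this
  have h4 : V * C₄ ^ 2 * h ^ ((1 : ℝ) / (4 * (d : ℝ))) ≤ 1 := by
    calc V * C₄ ^ 2 * h ^ ((1 : ℝ) / (4 * (d : ℝ)))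
        ≤ K₂ * K₂⁻¹ := by
          apply mul_le_mul (le_max_right _ _) hh4 (Real.rpow_nonneg h0.le _) hK₂0.le
      _ = 1 := mul_inv_cancel₀ hK₂0.ne'
  calc V * (C₄ * ε) ^ 2 = V * C₄ ^ 2 * ε ^ 2 := by ring
    _ = V * C₄ ^ 2 * (h ^ ((1 : ℝ) / (4 * (d : ℝ))) * h ^ ((1 : ℝ) / (12 * d))) := by
        rw [hε2, ← hsplit2]
    _ = (V * C₄ ^ 2 * h ^ ((1 : ℝ) / (4 * (d : ℝ)))) * h ^ ((1 : ℝ) / (12 * d)) := by ring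
    _ ≤ 1 * h ^ ((1 : ℝ) / (12 * d)) :=
        mul_le_mul_of_nonneg_right h4 (Real.rpow_nonneg h0.le _)
    _ = h ^ ((1 : ℝ) / (12 * d)) := one_mul _
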